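/- For every unit vector n ∈ ℝ³ and every point q ∈ ℝ³, the summed squared point-to-line distance (1/N)·Σ_{i=1}^{N} ‖(I − n nᵀ)(p_i − q)‖² is at least Tr(A) − λ₁(A) = λ₂(A) + λ₃(A), where λ₁ is the largest eigenvalue of the covariance matrix A. -/

import Mathlib

/-!
For a unit vector `n`, `‖(I - n nᵀ) w‖² = ‖w‖² - (n ⬝ w)²`. Splitting `pᵢ - q` as
`(pᵢ - p̄) + (p̄ - q)`, the cross terms vanish because the `pᵢ - p̄` sum to zero, so the mean
squared distance is `Tr A - nᵀ A n + ‖(I - n nᵀ)(p̄ - q)‖²`. In the orthonormal eigenbasis,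
`A = Uᵀ diag(λ) U`, whence `Tr A = λ₁ + λ₂ + λ₃` and the Rayleigh bound `nᵀ A n ≤ λ₁`.
-/

open Matrix Finset

section QuadraticForms

variable {m R : Type*} [Fintype m] [CommRing R]

theorem dotProduct_self_one_sub_vecMulVec_mulVec [DecidableEq m] {n : m → R}
    (hn : n ⬝ᵥ n = 1) (v : m → R) :
    ((1 - vecMulVec n n) *ᵥ v) ⬝ᵥ ((1 - vecMulVec n n) *ᵥ v) = v ⬝ᵥ v - (n ⬝ᵥ v) ^ 2 := by
  simp only [sub_mulVec, one_mulVec, vecMulVec_mulVec, op_smul_eq_smul, dotProduct_sub,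
    sub_dotProduct, dotProduct_smul, smul_dotProduct, smul_eq_mul, hn, dotProduct_comm v n]
  ring

theorem dotProduct_vecMulVec_self_mulVec (n v : m → R) :
    n ⬝ᵥ (vecMulVec v v *ᵥ n) = (n ⬝ᵥ v) ^ 2 := by
  rw [vecMulVec_mulVec, op_smul_eq_smul, dotProduct_smul, smul_eq_mul, dotProduct_comm v n, sq]

theorem trace_sub_dotProduct_mulVec_smul_sum_vecMulVec [DecidableEq m] {ι : Type*} [Fintype ι]
    (c : R) (v : ι → m → R) {n : m → R} (hn : n ⬝ᵥ n = 1) :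
    (c • ∑ i, vecMulVec (v i) (v i)).trace - n ⬝ᵥ ((c • ∑ i, vecMulVec (v i) (v i)) *ᵥ n) =
      c * ∑ i, ((1 - vecMulVec n n) *ᵥ v i) ⬝ᵥ ((1 - vecMulVec n n) *ᵥ v i) := by
  simp only [dotProduct_self_one_sub_vecMulVec_mulVec hn, trace_smul, trace_sum, trace_vecMulVec,
    smul_mulVec, sum_mulVec, dotProduct_smul, dotProduct_sum, dotProduct_vecMulVec_self_mulVec,
    smul_eq_mul, sum_sub_distrib, mul_sub]

theorem sum_add_dotProduct_self_of_sum_eq_zero {ι : Type*} [Fintype ι] {x : ι → m → R}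
    (hx : ∑ i, x i = 0) (y : m → R) :
    ∑ i, (x i + y) ⬝ᵥ (x i + y) = ∑ i, x i ⬝ᵥ x i + Fintype.card ι • (y ⬝ᵥ y) := by
  have hcross : ∑ i, x i ⬝ᵥ y = 0 := by rw [← sum_dotProduct, hx, zero_dotProduct]
  have hexpand : ∀ i, (x i + y) ⬝ᵥ (x i + y) = x i ⬝ᵥ x i + 2 * (x i ⬝ᵥ y) + y ⬝ᵥ y := by
    intro i
    rw [add_dotProduct, dotProduct_add, dotProduct_add, dotProduct_comm y (x i)]
    ring
  simp only [hexpand, sum_add_distrib, ← mul_sum, hcross, mul_zero, add_zero, sum_const, card_univ]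

end QuadraticForms

theorem sum_sub_inv_card_smul_sum {K E ι : Type*} [Field K] [CharZero K] [AddCommGroup E]
    [Module K E] [Fintype ι] [Nonempty ι] (f : ι → E) :
    ∑ i, (f i - (Fintype.card ι : K)⁻¹ • ∑ j, f j) = 0 := by
  rw [sum_sub_distrib, sum_const, card_univ, ← Nat.cast_smul_eq_nsmul K, smul_smul,
    mul_inv_cancel₀ (Nat.cast_ne_zero.mpr Fintype.card_ne_zero), one_smul, sub_self]

section OrthonormalEigenvectors

variable {m R : Type*} [Fintype m] [DecidableEq m] [CommRing R] {A : Matrix m m R} {lam : m → R}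
  {u : m → m → R}

theorem transpose_of_mul_of_eq_one (horth : ∀ a b, u a ⬝ᵥ u b = if a = b then 1 else 0) :
    (of u)ᵀ * of u = 1 := by
  refine mul_eq_one_comm.mp (ext fun a b => ?_)
  simpa [mul_apply, dotProduct, one_apply] using horth a b

theorem eq_transpose_of_mul_diagonal_mul_of
    (horth : ∀ a b, u a ⬝ᵥ u b = if a = b then 1 else 0) (heig : ∀ a, A *ᵥ u a = lam a • u a) :
    A = (of u)ᵀ * diagonal lam * of u := by
  have hAU : A * (of u)ᵀ = (of u)ᵀ * diagonal lam := by
    ext i a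
    simpa [mul_apply, mulVec, dotProduct, diagonal_apply, mul_comm] using congrFun (heig a) i
  rw [← hAU, mul_assoc, transpose_of_mul_of_eq_one horth, mul_one]

theorem trace_eq_sum_of_orthonormal_eigenvectors
    (horth : ∀ a b, u a ⬝ᵥ u b = if a = b then 1 else 0) (heig : ∀ a, A *ᵥ u a = lam a • u a) :
    A.trace = ∑ a, lam a := by
  rw [eq_transpose_of_mul_diagonal_mul_of horth heig, trace_mul_comm, ← mul_assoc,
    mul_eq_one_comm.mp (transpose_of_mul_of_eq_one horth), one_mul, trace_diagonal]

theorem dotProduct_mulVec_le_of_orthonormal_eigenvectors [LinearOrder R] [IsStrictOrderedRing R]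
    (horth : ∀ a b, u a ⬝ᵥ u b = if a = b then 1 else 0) (heig : ∀ a, A *ᵥ u a = lam a • u a)
    {c : R} (hc : ∀ a, lam a ≤ c) (n : m → R) :
    n ⬝ᵥ (A *ᵥ n) ≤ c * (n ⬝ᵥ n) := by
  have hpull : ∀ x, n ⬝ᵥ ((of u)ᵀ *ᵥ x) = (of u *ᵥ n) ⬝ᵥ x := fun x => by
    rw [dotProduct_mulVec, vecMul_transpose]
  set w := of u *ᵥ n
  have hquad : n ⬝ᵥ (A *ᵥ n) = ∑ a, lam a * (w a * w a) := by
    rw [eq_transpose_of_mul_diagonal_mul_of horth heig, ← mulVec_mulVec, ← mulVec_mulVec, hpull]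
    simp only [dotProduct, mulVec_diagonal]
    exact sum_congr rfl fun a _ => by ring
  have hnorm : n ⬝ᵥ n = w ⬝ᵥ w := by
    rw [← hpull, mulVec_mulVec, transpose_of_mul_of_eq_one horth, one_mulVec]
  rw [hquad, hnorm, dotProduct, mul_sum]
  exact sum_le_sum fun a _ => mul_le_mul_of_nonneg_right (hc a) (mul_self_nonneg (w a))

end OrthonormalEigenvectors

/-- For every unit vector `n` and point `q`, the mean squared
point-to-line distance `(1/N) ∑ ‖(I - nnᵀ)(pᵢ - q)‖²` is bounded below by
`Tr(A) - λ₁(A) = λ₂(A) + λ₃(A)`.  The squared Euclidean norm `‖w‖²` is written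
as the dot product `w ⬝ᵥ w`. -/
theorem edge_cost_lower_bound
    (N : ℕ) (hN : 1 ≤ N) (p : Fin N → Fin 3 → ℝ)
    (pbar : Fin 3 → ℝ) (hpbar : pbar = (N : ℝ)⁻¹ • ∑ i, p i)
    (A : Matrix (Fin 3) (Fin 3) ℝ)
    (hA : A = (N : ℝ)⁻¹ • ∑ i, vecMulVec (p i - pbar) (p i - pbar))
    (lam : Fin 3 → ℝ) (u : Fin 3 → Fin 3 → ℝ)
    (horth : ∀ a b : Fin 3, u a ⬝ᵥ u b = if a = b then 1 else 0)
    (heig : ∀ a : Fin 3, A *ᵥ u a = lam a • u a)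
    (hord : lam 1 ≤ lam 0 ∧ lam 2 ≤ lam 1) :
    A.trace - lam 0 = lam 1 + lam 2 ∧
    (∀ n q : Fin 3 → ℝ, n ⬝ᵥ n = 1 →
      lam 1 + lam 2 ≤
        (N : ℝ)⁻¹ * ∑ i,
          (((1 : Matrix (Fin 3) (Fin 3) ℝ) - vecMulVec n n) *ᵥ (p i - q)) ⬝ᵥ
          (((1 : Matrix (Fin 3) (Fin 3) ℝ) - vecMulVec n n) *ᵥ (p i - q))) := by
  have htrace : A.trace - lam 0 = lam 1 + lam 2 := by
    rw [trace_eq_sum_of_orthonormal_eigenvectors horth heig, Fin.sum_univ_three]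
    ring
  refine ⟨htrace, fun n q hn => ?_⟩
  have : NeZero N := ⟨by omega⟩
  set P : Matrix (Fin 3) (Fin 3) ℝ := 1 - vecMulVec n n
  have hray : n ⬝ᵥ (A *ᵥ n) ≤ lam 0 := by
    have hmax : ∀ a, lam a ≤ lam 0 := by
      intro a; fin_cases a <;> dsimp <;> linarith [hord.1, hord.2]
    simpa [hn] using dotProduct_mulVec_le_of_orthonormal_eigenvectors horth heig hmax n
  have hcentered : ∑ i, P *ᵥ (p i - pbar) = 0 := by
    rw [← mulVec_sum, hpbar]
    simpa using congrArg (P *ᵥ ·) (sum_sub_inv_card_smul_sum (K := ℝ) p)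
  have hdecomp : ∀ i, P *ᵥ (p i - q) = P *ᵥ (p i - pbar) + P *ᵥ (pbar - q) := fun i => by
    rw [← mulVec_add, sub_add_sub_cancel]
  calc lam 1 + lam 2 = A.trace - lam 0 := htrace.symm
    _ ≤ A.trace - n ⬝ᵥ (A *ᵥ n) := by linarith
    _ = (N : ℝ)⁻¹ * ∑ i, (P *ᵥ (p i - pbar)) ⬝ᵥ (P *ᵥ (p i - pbar)) := by
      rw [hA]; exact trace_sub_dotProduct_mulVec_smul_sum_vecMulVec _ _ hn
    _ ≤ (N : ℝ)⁻¹ * ∑ i, (P *ᵥ (p i - pbar)) ⬝ᵥ (P *ᵥ (p i - pbar))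
          + (P *ᵥ (pbar - q)) ⬝ᵥ (P *ᵥ (pbar - q)) :=
      le_add_of_nonneg_right (dotProduct_self_star_nonneg _)
    _ = (N : ℝ)⁻¹ * ∑ i, (P *ᵥ (p i - q)) ⬝ᵥ (P *ᵥ (p i - q)) := by
      simp only [hdecomp, sum_add_dotProduct_self_of_sum_eq_zero hcentered, Fintype.card_fin,
        nsmul_eq_mul]
      field_simp
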